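/- Let K : ℝ² → ℝ² be the Biot–Savart kernel, K(z) = −(1/(2π)) (Jz)/|z|² for z ≠ 0 and K(0) = 0, and let ω : ℝ² → ℝ be measurable, integrable, and essentially bounded. Then the function (x,y) ↦ K(x − y) ω(x) ω(y) is integrable on ℝ² × ℝ², and ∫_{ℝ²×ℝ²} K(x − y) ω(x) ω(y) dx dy = 0 (the self-interaction of the vorticity does not move the center of vorticity). -/

import Mathlib

open MeasureTheory Classical Metric Set


/-- Clockwise rotation by π/2 on ℝ²: `J (v₁, v₂) = (v₂, -v₁)`. -/
noncomputable def J (v : EuclideanSpace ℝ (Fin 2)) : EuclideanSpace ℝ (Fin 2) :=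
  WithLp.toLp 2 ![v 1, -v 0]

/-- The Biot–Savart kernel `K z = -(1/(2π)) (J z)/|z|²` (with `K 0 = 0`). -/
noncomputable def K (z : EuclideanSpace ℝ (Fin 2)) : EuclideanSpace ℝ (Fin 2) :=
  if z = 0 then 0 else (-(1 / (2 * Real.pi * ‖z‖ ^ 2))) • J z

lemma J_norm (v : EuclideanSpace ℝ (Fin 2)) : ‖J v‖ = ‖v‖ := by
  simp [J, EuclideanSpace.norm_eq, Fin.sum_univ_two]
  ring_nf

lemma J_neg (v : EuclideanSpace ℝ (Fin 2)) : J (-v) = -(J v) := by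
  ext i
  fin_cases i <;> simp [J]

lemma K_neg (z : EuclideanSpace ℝ (Fin 2)) : K (-z) = -(K z) := by
  unfold K
  by_cases h : z = 0
  · simp [h]
  · rw [if_neg (by simpa using h), if_neg h, norm_neg, J_neg, smul_neg]

lemma J_measurable : Measurable J := by
  unfold J
  apply (PiLp.continuous_toLp 2 _).measurable.comp
  apply measurable_pi_lambda
  intro i
  have h0 : Measurable fun v : EuclideanSpace ℝ (Fin 2) => v 0 := (PiLp.continuous_apply 2 _ 0).measurable
  have h1 : Measurable fun v : EuclideanSpace ℝ (Fin 2) => v 1 := (PiLp.continuous_apply 2 _ 1).measurable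
  fin_cases i
  · simpa [J] using h1
  · simpa [J] using h0

lemma K_measurable : Measurable K := by
  unfold K
  apply Measurable.ite (MeasurableSet.singleton (0 : EuclideanSpace ℝ (Fin 2)))
  · exact measurable_const
  · have : Measurable fun z : EuclideanSpace ℝ (Fin 2) => -(1 / (2 * Real.pi * ‖z‖ ^ 2)) :=
      (((measurable_norm.pow_const 2).const_mul (2 * Real.pi)).inv.const_mul 1).neg
    exact this.smul J_measurable


lemma K_norm_le (z : EuclideanSpace ℝ (Fin 2)) : ‖K z‖ ≤ (2 * Real.pi)⁻¹ * ‖z‖⁻¹ := by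
  unfold K
  by_cases h : z = 0
  · simp [h]
  · rw [if_neg h, norm_smul, J_norm]
    have hz : (0:ℝ) < ‖z‖ := norm_pos_iff.2 h
    have hpi : (0:ℝ) < 2 * Real.pi := by positivity
    rw [Real.norm_eq_abs, abs_neg, abs_of_nonneg (by positivity)]
    rw [div_mul_eq_mul_div, one_mul]
    apply le_of_eq
    field_simp



lemma g_integrable :
    Integrable ((ball (0 : EuclideanSpace ℝ (Fin 2)) 1).indicator fun z => ‖z‖⁻¹) := by
  have hmble : Measurable ((ball (0 : EuclideanSpace ℝ (Fin 2)) 1).indicator fun z => ‖z‖⁻¹) :=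
    measurable_norm.inv.indicator measurableSet_ball
  refine ⟨hmble.aestronglyMeasurable, ?_⟩
  rw [hasFiniteIntegral_iff_ofReal]; swap
  · refine Filter.Eventually.of_forall fun z => ?_
    by_cases hz : z ∈ ball (0 : EuclideanSpace ℝ (Fin 2)) 1 <;> simp [indicator, hz, inv_nonneg.2 (norm_nonneg z)]
  have hind : (fun z : EuclideanSpace ℝ (Fin 2) => ENNReal.ofReal ((ball (0 : EuclideanSpace ℝ (Fin 2)) 1).indicator (fun z => ‖z‖⁻¹) z))
      = (ball (0 : EuclideanSpace ℝ (Fin 2)) 1).indicator fun z => ENNReal.ofReal (‖z‖⁻¹) := by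
    funext z
    by_cases hz : z ∈ ball (0 : EuclideanSpace ℝ (Fin 2)) 1 <;> simp [indicator, hz]
  have hrw : (∫⁻ z, ENNReal.ofReal ((ball (0 : EuclideanSpace ℝ (Fin 2)) 1).indicator (fun z => ‖z‖⁻¹) z))
      = ∫⁻ z in ball (0 : EuclideanSpace ℝ (Fin 2)) 1, ENNReal.ofReal (‖z‖⁻¹) := by
    rw [show (fun z : EuclideanSpace ℝ (Fin 2) => ENNReal.ofReal ((ball (0 : EuclideanSpace ℝ (Fin 2)) 1).indicator (fun z => ‖z‖⁻¹) z))
        = fun z => (ball (0 : EuclideanSpace ℝ (Fin 2)) 1).indicator (fun z => ENNReal.ofReal (‖z‖⁻¹)) z from hind]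
    exact lintegral_indicator measurableSet_ball _
  rw [hrw]
  -- annuli decomposition
  set A : ℕ → Set (EuclideanSpace ℝ (Fin 2)) := fun n => ball 0 ((1/2:ℝ)^n) \ ball 0 ((1/2:ℝ)^(n+1)) with hA
  have hsub : ball (0 : EuclideanSpace ℝ (Fin 2)) 1 ⊆ {0} ∪ ⋃ n, A n := by
    intro z hz
    by_cases h0 : z = 0
    · exact Or.inl h0
    · right
      have hzpos : (0:ℝ) < ‖z‖ := norm_pos_iff.2 h0
      have hz1 : ‖z‖ < 1 := by simpa [dist_eq_norm] using hz
      have hex : ∃ n : ℕ, (1/2:ℝ)^(n+1) ≤ ‖z‖ := by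
        obtain ⟨n, hn⟩ := exists_pow_lt_of_lt_one hzpos (by norm_num : (1/2:ℝ) < 1)
        refine ⟨n, le_of_lt ?_⟩
        calc (1/2:ℝ)^(n+1) ≤ (1/2:ℝ)^n := by
              apply pow_le_pow_of_le_one <;> norm_num
          _ < ‖z‖ := hn
      classical
      have hN := Nat.find_spec hex
      refine mem_iUnion.2 ⟨Nat.find hex, ?_⟩
      constructor
      · rw [mem_ball, dist_eq_norm, sub_zero]
        rcases Nat.eq_zero_or_pos (Nat.find hex) with h | h
        · rw [h]; simpa using hz1
        · have hlt : Nat.find hex - 1 < Nat.find hex := Nat.sub_lt h one_pos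
          have hm := Nat.find_min hex hlt
          push_neg at hm
          rwa [Nat.sub_add_cancel h] at hm
      · intro hmem
        rw [mem_ball, dist_eq_norm, sub_zero] at hmem
        exact absurd hN (not_le.2 hmem)
  calc ∫⁻ z in ball (0 : EuclideanSpace ℝ (Fin 2)) 1, ENNReal.ofReal (‖z‖⁻¹)
      ≤ ∫⁻ z in ({0} ∪ ⋃ n, A n : Set (EuclideanSpace ℝ (Fin 2))), ENNReal.ofReal (‖z‖⁻¹) :=
        lintegral_mono_set hsub
    _ ≤ (∫⁻ z in ({0} : Set (EuclideanSpace ℝ (Fin 2))), ENNReal.ofReal (‖z‖⁻¹))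
        + ∫⁻ z in (⋃ n, A n : Set (EuclideanSpace ℝ (Fin 2))), ENNReal.ofReal (‖z‖⁻¹) := lintegral_union_le _ _ _
    _ ≤ 0 + ∑' n, ∫⁻ z in A n, ENNReal.ofReal (‖z‖⁻¹) := by
        gcongr
        · have : volume ({0} : Set (EuclideanSpace ℝ (Fin 2))) = 0 := measure_singleton 0
          rw [setLIntegral_measure_zero _ _ this]
        · exact lintegral_iUnion_le _ _
    _ = ∑' n, ∫⁻ z in A n, ENNReal.ofReal (‖z‖⁻¹) := by rw [zero_add]
    _ ≤ ∑' n, ENNReal.ofReal (2 * (1/2:ℝ)^n) * volume (ball (0 : EuclideanSpace ℝ (Fin 2)) 1) := by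
        apply ENNReal.tsum_le_tsum
        intro n
        have hstep : ∫⁻ z in A n, ENNReal.ofReal (‖z‖⁻¹)
            ≤ ∫⁻ _ in A n, ENNReal.ofReal ((2:ℝ)^(n+1)) := by
          apply setLIntegral_mono measurable_const
          intro z hz
          apply ENNReal.ofReal_le_ofReal
          have hzlb : (1/2:ℝ)^(n+1) ≤ ‖z‖ := by
            have := hz.2
            rw [mem_ball, dist_eq_norm, sub_zero, not_lt] at this
            exact this
          have h2 : ((2:ℝ)^(n+1))⁻¹ = (1/2:ℝ)^(n+1) := by
            rw [← inv_pow]; norm_num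
          calc ‖z‖⁻¹ ≤ ((1/2:ℝ)^(n+1))⁻¹ := by
                apply inv_anti₀ (by positivity) hzlb
            _ = (2:ℝ)^(n+1) := by rw [← h2, inv_inv]
        refine hstep.trans ?_
        rw [setLIntegral_const]
        have hAn : volume (A n) ≤ ENNReal.ofReal (((1/2:ℝ)^n)^2) * volume (ball (0 : EuclideanSpace ℝ (Fin 2)) 1) := by
          calc volume (A n) ≤ volume (ball (0 : EuclideanSpace ℝ (Fin 2)) ((1/2:ℝ)^n)) := measure_mono diff_subset
            _ = ENNReal.ofReal (((1/2:ℝ)^n)^(Module.finrank ℝ (EuclideanSpace ℝ (Fin 2)))) * volume (ball (0 : EuclideanSpace ℝ (Fin 2)) 1) :=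
                Measure.addHaar_ball _ _ (by positivity)
            _ = ENNReal.ofReal (((1/2:ℝ)^n)^2) * volume (ball (0 : EuclideanSpace ℝ (Fin 2)) 1) := by
                rw [finrank_euclideanSpace_fin]
        calc ENNReal.ofReal ((2:ℝ)^(n+1)) * volume (A n)
            ≤ ENNReal.ofReal ((2:ℝ)^(n+1)) *
              (ENNReal.ofReal (((1/2:ℝ)^n)^2) * volume (ball (0 : EuclideanSpace ℝ (Fin 2)) 1)) := by gcongr
          _ = ENNReal.ofReal (2 * (1/2:ℝ)^n) * volume (ball (0 : EuclideanSpace ℝ (Fin 2)) 1) := by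
              rw [← mul_assoc, ← ENNReal.ofReal_mul (by positivity)]
              congr 2
              have h2n : (1/2:ℝ)^n = ((2:ℝ)^n)⁻¹ := by rw [one_div, inv_pow]
              rw [h2n, pow_succ]
              field_simp
    _ < ⊤ := by
        rw [ENNReal.tsum_mul_right]
        apply ENNReal.mul_lt_top
        · have : ∀ n : ℕ, ENNReal.ofReal (2 * (1/2:ℝ)^n)
              = ENNReal.ofReal 2 * (ENNReal.ofReal (1/2))^n := by
            intro n
            rw [ENNReal.ofReal_mul (by norm_num), ENNReal.ofReal_pow (by norm_num)]
          simp_rw [this]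
          rw [ENNReal.tsum_mul_left, ENNReal.tsum_geometric]
          apply ENNReal.mul_lt_top ENNReal.ofReal_lt_top
          rw [lt_top_iff_ne_top]
          apply ENNReal.inv_ne_top.2
          rw [ne_eq, tsub_eq_zero_iff_le, not_le]
          exact ENNReal.ofReal_lt_one.2 (by norm_num)
        · exact measure_ball_lt_top


/-- The self-interaction of the vorticity does not move the center of vorticity:
the double integral of `K(x-y) ω(x) ω(y)` is well defined and vanishes. -/
theorem self_interaction_vanishes (ω : EuclideanSpace ℝ (Fin 2) → ℝ)
    (hmeas : Measurable ω) (hint : Integrable ω) (hbdd : MemLp ω ⊤) :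
    Integrable (fun p : EuclideanSpace ℝ (Fin 2) × EuclideanSpace ℝ (Fin 2) =>
        (ω p.1 * ω p.2) • K (p.1 - p.2)) ∧
      ∫ p : EuclideanSpace ℝ (Fin 2) × EuclideanSpace ℝ (Fin 2),
        (ω p.1 * ω p.2) • K (p.1 - p.2) = 0 := by
  set g : EuclideanSpace ℝ (Fin 2) → ℝ := (ball (0 : EuclideanSpace ℝ (Fin 2)) 1).indicator fun z => ‖z‖⁻¹ with hg
  have hg0 : ∀ z, 0 ≤ g z := by
    intro z
    by_cases hz : z ∈ ball (0 : EuclideanSpace ℝ (Fin 2)) 1 <;>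
      simp [hg, indicator, hz, inv_nonneg.2 (norm_nonneg z)]
  set M : ℝ := (eLpNorm ω ⊤ volume).toReal with hM
  have hM0 : 0 ≤ M := ENNReal.toReal_nonneg
  have hωM : ∀ᵐ x : EuclideanSpace ℝ (Fin 2), |ω x| ≤ M := by
    have h1 : ∀ᵐ x : EuclideanSpace ℝ (Fin 2), (‖ω x‖₊ : ENNReal) ≤ eLpNormEssSup ω volume :=
      ae_le_eLpNormEssSup
    have hne : eLpNormEssSup ω volume ≠ ⊤ := by
      rw [← eLpNorm_exponent_top]
      exact hbdd.2.ne
    filter_upwards [h1] with x hx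
    have := ENNReal.toReal_mono hne hx
    simpa [hM, eLpNorm_exponent_top, Real.norm_eq_abs] using this
  -- measurability of the integrand
  have hF : Measurable (fun p : EuclideanSpace ℝ (Fin 2) × EuclideanSpace ℝ (Fin 2) => (ω p.1 * ω p.2) • K (p.1 - p.2)) :=
    ((hmeas.comp measurable_fst).mul (hmeas.comp measurable_snd)).smul
      (K_measurable.comp (measurable_fst.sub measurable_snd))
  -- the dominating function
  set B : EuclideanSpace ℝ (Fin 2) × EuclideanSpace ℝ (Fin 2) → ℝ := fun p =>
    (2 * Real.pi)⁻¹ * (M * (|ω p.2| * g (p.1 - p.2)) + |ω p.1| * |ω p.2|) with hB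
  have hBint : Integrable B (volume : Measure (EuclideanSpace ℝ (Fin 2) × EuclideanSpace ℝ (Fin 2))) := by
    rw [Measure.volume_eq_prod]
    refine Integrable.const_mul ?_ _
    refine Integrable.add ?_ ?_
    · refine Integrable.const_mul ?_ M
      exact (Integrable.convolution_integrand (ContinuousLinearMap.mul ℝ ℝ)
        hint.abs g_integrable)
    · exact hint.abs.mul_prod hint.abs
  -- a.e. bound
  have hbound : ∀ᵐ p : EuclideanSpace ℝ (Fin 2) × EuclideanSpace ℝ (Fin 2), ‖(ω p.1 * ω p.2) • K (p.1 - p.2)‖ ≤ B p := by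
    rw [Measure.volume_eq_prod]
    have hfst : ∀ᵐ p : EuclideanSpace ℝ (Fin 2) × EuclideanSpace ℝ (Fin 2) ∂(volume : Measure (EuclideanSpace ℝ (Fin 2))).prod volume, |ω p.1| ≤ M :=
      (Measure.quasiMeasurePreserving_fst).ae hωM
    filter_upwards [hfst] with p hp
    have hy : |ω p.2| ≤ |ω p.2| := le_rfl
    have hKn := K_norm_le (p.1 - p.2)
    have hπ : (0:ℝ) < (2 * Real.pi)⁻¹ := by positivity
    rw [norm_smul, Real.norm_eq_abs, abs_mul]
    by_cases hball : p.1 - p.2 ∈ ball (0 : EuclideanSpace ℝ (Fin 2)) 1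
    · have hgeq : g (p.1 - p.2) = ‖p.1 - p.2‖⁻¹ := by simp [hg, indicator, hball]
      have h1 : |ω p.1| * |ω p.2| * ‖K (p.1 - p.2)‖
          ≤ |ω p.1| * |ω p.2| * ((2 * Real.pi)⁻¹ * g (p.1 - p.2)) := by
        rw [hgeq]; gcongr
      refine h1.trans ?_
      have h2 : |ω p.1| * |ω p.2| * ((2 * Real.pi)⁻¹ * g (p.1 - p.2))
          ≤ M * |ω p.2| * ((2 * Real.pi)⁻¹ * g (p.1 - p.2)) := by
        gcongr
        exact mul_nonneg hπ.le (hg0 _)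
      refine h2.trans ?_
      rw [hB]
      have : (0:ℝ) ≤ (2 * Real.pi)⁻¹ * (|ω p.1| * |ω p.2|) := by positivity
      nlinarith [hg0 (p.1 - p.2), abs_nonneg (ω p.2)]
    · have h1n : (1:ℝ) ≤ ‖p.1 - p.2‖ := by
        rw [mem_ball, dist_eq_norm, sub_zero, not_lt] at hball
        exact hball
      have hKle : ‖K (p.1 - p.2)‖ ≤ (2 * Real.pi)⁻¹ := by
        refine hKn.trans ?_
        calc (2 * Real.pi)⁻¹ * ‖p.1 - p.2‖⁻¹ ≤ (2 * Real.pi)⁻¹ * 1 := by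
              gcongr
              exact inv_le_one_of_one_le₀ h1n
          _ = (2 * Real.pi)⁻¹ := mul_one _
      have h1 : |ω p.1| * |ω p.2| * ‖K (p.1 - p.2)‖
          ≤ |ω p.1| * |ω p.2| * (2 * Real.pi)⁻¹ := by gcongr
      refine h1.trans ?_
      rw [hB]
      have : (0:ℝ) ≤ (2 * Real.pi)⁻¹ * (M * (|ω p.2| * g (p.1 - p.2))) :=
        mul_nonneg hπ.le (mul_nonneg hM0 (mul_nonneg (abs_nonneg _) (hg0 _)))
      nlinarith
  have hInt : Integrable (fun p : EuclideanSpace ℝ (Fin 2) × EuclideanSpace ℝ (Fin 2) => (ω p.1 * ω p.2) • K (p.1 - p.2)) :=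
    Integrable.mono' hBint hF.aestronglyMeasurable hbound
  refine ⟨hInt, ?_⟩
  -- antisymmetry
  set f : EuclideanSpace ℝ (Fin 2) × EuclideanSpace ℝ (Fin 2) → EuclideanSpace ℝ (Fin 2) := fun p => (ω p.1 * ω p.2) • K (p.1 - p.2) with hf
  have hswap : ∫ p : EuclideanSpace ℝ (Fin 2) × EuclideanSpace ℝ (Fin 2), f p = ∫ p : EuclideanSpace ℝ (Fin 2) × EuclideanSpace ℝ (Fin 2), f p.swap := by
    rw [Measure.volume_eq_prod, ← integral_prod_swap f]
  have hneg : ∀ p : EuclideanSpace ℝ (Fin 2) × EuclideanSpace ℝ (Fin 2), f p.swap = -f p := by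
    intro p
    have : p.2 - p.1 = -(p.1 - p.2) := by abel
    simp only [hf, Prod.swap, this, K_neg]
    rw [mul_comm]
    simp
  have hI : ∫ p : EuclideanSpace ℝ (Fin 2) × EuclideanSpace ℝ (Fin 2), f p = -∫ p : EuclideanSpace ℝ (Fin 2) × EuclideanSpace ℝ (Fin 2), f p := by
    calc ∫ p : EuclideanSpace ℝ (Fin 2) × EuclideanSpace ℝ (Fin 2), f p = ∫ p : EuclideanSpace ℝ (Fin 2) × EuclideanSpace ℝ (Fin 2), f p.swap := hswap
      _ = ∫ p : EuclideanSpace ℝ (Fin 2) × EuclideanSpace ℝ (Fin 2), -f p := integral_congr_ae (Filter.Eventually.of_forall hneg)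
      _ = -∫ p : EuclideanSpace ℝ (Fin 2) × EuclideanSpace ℝ (Fin 2), f p := integral_neg f
  have h2 : (∫ p : EuclideanSpace ℝ (Fin 2) × EuclideanSpace ℝ (Fin 2), f p) + ∫ p : EuclideanSpace ℝ (Fin 2) × EuclideanSpace ℝ (Fin 2), f p = 0 :=
    eq_neg_iff_add_eq_zero.1 hI
  have h3 : (2:ℝ) • ∫ p : EuclideanSpace ℝ (Fin 2) × EuclideanSpace ℝ (Fin 2), f p = 0 := by rw [two_smul]; exact h2
  rcases smul_eq_zero.1 h3 with h | h
  · norm_num at h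
  · exact h
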